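/- If sup_{x,x'} |k̂(x,x') − k(x,x')| ≤ ε for all points, then for the n×n kernel matrices ‖K̂ − K‖₂ ≤ ‖K̂ − K‖_F ≤ nε, and for the test kernel vectors ‖k̂_x − k_x‖₂ ≤ √n ε; consequently, with λ = nλ₀, the kernel ridge regression predictions satisfy |ĥ(x) − h(x)| ≤ ((λ₀+1)/λ₀²) σ_y ε. -/

import Mathlib

/-!
Row-wise Cauchy–Schwarz bounds the spectral norm by the Frobenius norm, and entrywise bounds
by `ε` bound the Frobenius norm by `nε` and Euclidean norms of vectors by `√n ε`.

For the predictions, write `R = (K + λ)⁻¹` and `R̂ = (K̂ + λ)⁻¹`. Positive semidefiniteness gives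
`λ‖u‖² ≤ ⟪u, (K + λ)u⟫`, hence `‖R‖, ‖R̂‖ ≤ 1/λ`. The resolvent identity
`R̂ - R = R̂ (K - K̂) R` splits `ĥ - h = ⟪y, R̂ (k̂ - k)⟫ + ⟪y, (R̂ - R) k⟫`, so
`|ĥ - h| ≤ ‖y‖ (‖k̂ - k‖/λ + ‖K̂ - K‖ ‖k‖/λ²)`. With `‖y‖ = √n σ_y`, `‖k‖ ≤ √n` and `λ = nλ₀`
this is `σ_y ε/λ₀ + σ_y ε/λ₀²`.
-/

open Real Matrix WithLp
open scoped RealInnerProductSpace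

noncomputable def krrPrediction {ι : Type*} [Fintype ι] [DecidableEq ι] (K : Matrix ι ι ℝ)
    (c : ℝ) (y k : ι → ℝ) : ℝ :=
  y ⬝ᵥ ((K + c • 1)⁻¹ *ᵥ k)

section

variable {ι : Type*} [Fintype ι]

lemma sqrt_sum_sq_le_sqrt_card_mul {f : ι → ℝ} {ε : ℝ} (hε : 0 ≤ ε) (hf : ∀ i, |f i| ≤ ε) :
    √(∑ i, f i ^ 2) ≤ √(Fintype.card ι) * ε := by
  rw [← sqrt_sq hε, ← sqrt_mul (Nat.cast_nonneg _)]
  refine sqrt_le_sqrt ?_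
  calc ∑ i, f i ^ 2 ≤ ∑ _i : ι, ε ^ 2 :=
        Finset.sum_le_sum fun i _ => sq_le_sq' (abs_le.mp (hf i)).1 (abs_le.mp (hf i)).2
    _ = Fintype.card ι * ε ^ 2 := by simp

lemma sqrt_sum_sum_sq_le_card_mul {A : Matrix ι ι ℝ} {ε : ℝ} (hε : 0 ≤ ε)
    (hA : ∀ i j, |A i j| ≤ ε) : √(∑ i, ∑ j, A i j ^ 2) ≤ Fintype.card ι * ε := by
  rw [← Fintype.sum_prod_type' fun i j => A i j ^ 2]
  calc _ ≤ √(Fintype.card (ι × ι)) * ε :=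
        sqrt_sum_sq_le_sqrt_card_mul (f := fun p => A p.1 p.2) hε fun p => hA p.1 p.2
    _ = Fintype.card ι * ε := by
        rw [Fintype.card_prod, Nat.cast_mul, sqrt_mul_self (Nat.cast_nonneg _)]

lemma EuclideanSpace.norm_eq_sqrt_sum_sq (x : EuclideanSpace ℝ ι) : ‖x‖ = √(∑ i, x i ^ 2) := by
  simp [EuclideanSpace.norm_eq]

lemma norm_toLp_le_sqrt_card_mul {v : ι → ℝ} {ε : ℝ} (hε : 0 ≤ ε) (hv : ∀ i, |v i| ≤ ε) :
    ‖toLp 2 v‖ ≤ √(Fintype.card ι) * ε := by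
  rw [EuclideanSpace.norm_eq_sqrt_sum_sq]
  exact sqrt_sum_sq_le_sqrt_card_mul hε hv

variable [DecidableEq ι]

lemma norm_toEuclideanCLM_le_sqrt_sum_sq (A : Matrix ι ι ℝ) :
    ‖toEuclideanCLM (𝕜 := ℝ) A‖ ≤ √(∑ i, ∑ j, A i j ^ 2) := by
  refine ContinuousLinearMap.opNorm_le_bound _ (sqrt_nonneg _) fun x => ?_
  have hrow (i : ι) : (A *ᵥ ofLp x) i ^ 2 ≤ (∑ j, A i j ^ 2) * ∑ j, x j ^ 2 :=
    Finset.sum_mul_sq_le_sq_mul_sq _ _ _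
  rw [EuclideanSpace.norm_eq_sqrt_sum_sq, EuclideanSpace.norm_eq_sqrt_sum_sq,
    ← sqrt_mul (by positivity), ofLp_toEuclideanCLM, Finset.sum_mul]
  exact sqrt_le_sqrt (Finset.sum_le_sum fun i _ => hrow i)

lemma Matrix.PosSemidef.mul_norm_sq_le_inner_add_smul_one {A : Matrix ι ι ℝ} (hA : A.PosSemidef)
    (c : ℝ) (x : EuclideanSpace ℝ ι) :
    c * ‖x‖ ^ 2 ≤ ⟪x, toEuclideanCLM (𝕜 := ℝ) (A + c • 1) x⟫ := by
  have hpsd : 0 ≤ ⟪x, toEuclideanCLM (𝕜 := ℝ) A x⟫ := by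
    simpa [inner_toEuclideanCLM] using hA.dotProduct_mulVec_nonneg (ofLp x)
  simpa [inner_add_right, inner_smul_right, real_inner_self_eq_norm_sq] using hpsd

lemma Matrix.PosSemidef.norm_toEuclideanCLM_inv_add_smul_one_le {A : Matrix ι ι ℝ}
    (hA : A.PosSemidef) {c : ℝ} (hc : 0 < c) :
    ‖toEuclideanCLM (n := ι) (𝕜 := ℝ) (A + c • 1)⁻¹‖ ≤ c⁻¹ := by
  have hunit : IsUnit (A + c • 1) := (PosDef.posSemidef_add hA (PosDef.one.smul hc)).isUnit
  refine ContinuousLinearMap.opNorm_le_bound _ (inv_nonneg.mpr hc.le) fun x => ?_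
  set u := toEuclideanCLM (𝕜 := ℝ) (A + c • 1)⁻¹ x
  have hu : toEuclideanCLM (𝕜 := ℝ) (A + c • 1) u = x := by
    rw [← mul_apply_eq_comp, ← map_mul,
      mul_nonsing_inv _ ((isUnit_iff_isUnit_det _).mp hunit), map_one,
      one_apply_eq_self]
  have hcoercive : c * ‖u‖ ^ 2 ≤ ‖u‖ * ‖x‖ :=
    (hA.mul_norm_sq_le_inner_add_smul_one c u).trans (hu ▸ real_inner_le_norm u x)
  rw [inv_mul_eq_div, le_div_iff₀ hc]
  rcases (norm_nonneg u).eq_or_lt with hu0 | hu0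
  · rw [← hu0, zero_mul]
    exact norm_nonneg x
  · exact le_of_mul_le_mul_left (by linarith) hu0

lemma krrPrediction_eq_inner (K : Matrix ι ι ℝ) (c : ℝ) (y k : ι → ℝ) :
    krrPrediction K c y k = ⟪toLp 2 y, toEuclideanCLM (𝕜 := ℝ) (K + c • 1)⁻¹ (toLp 2 k)⟫ := by
  rw [inner_toEuclideanCLM]
  rfl

theorem abs_krrPrediction_sub_le {K K' : Matrix ι ι ℝ} (hK : K.PosSemidef) (hK' : K'.PosSemidef)
    {c : ℝ} (hc : 0 < c) (y k k' : ι → ℝ) :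
    |krrPrediction K' c y k' - krrPrediction K c y k| ≤
      ‖toLp 2 y‖ * (‖toLp 2 (k' - k)‖ / c +
        ‖toEuclideanCLM (𝕜 := ℝ) (K' - K)‖ * ‖toLp 2 k‖ / c ^ 2) := by
  set R := toEuclideanCLM (𝕜 := ℝ) (K + c • 1)⁻¹
  set R' := toEuclideanCLM (𝕜 := ℝ) (K' + c • 1)⁻¹
  have hR : ‖R‖ ≤ c⁻¹ := hK.norm_toEuclideanCLM_inv_add_smul_one_le hc
  have hR' : ‖R'‖ ≤ c⁻¹ := hK'.norm_toEuclideanCLM_inv_add_smul_one_le hc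
  have hunit : IsUnit (K' + c • 1) ↔ IsUnit (K + c • 1) :=
    iff_of_true (PosDef.posSemidef_add hK' (PosDef.one.smul hc)).isUnit
      (PosDef.posSemidef_add hK (PosDef.one.smul hc)).isUnit
  have hresolvent : R' - R = R' * toEuclideanCLM (𝕜 := ℝ) (K - K') * R := by
    rw [← map_sub, inv_sub_inv hunit, add_sub_add_right_eq_sub, map_mul, map_mul]
  have hδ : ‖toEuclideanCLM (𝕜 := ℝ) (K - K')‖ = ‖toEuclideanCLM (𝕜 := ℝ) (K' - K)‖ := by
    rw [map_sub, map_sub, norm_sub_rev]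
  set δ := ‖toEuclideanCLM (𝕜 := ℝ) (K' - K)‖
  have hsplit : krrPrediction K' c y k' - krrPrediction K c y k =
      ⟪toLp 2 y, R' (toLp 2 (k' - k))⟫ + ⟪toLp 2 y, (R' - R) (toLp 2 k)⟫ := by
    simp only [krrPrediction_eq_inner, toLp_sub, map_sub, _root_.sub_apply, inner_sub_right]
    ring
  have hresolvent_le : ‖(R' - R) (toLp 2 k)‖ ≤ c⁻¹ * δ * c⁻¹ * ‖toLp 2 k‖ := by
    rw [hresolvent]
    refine ((R' * _ * R).le_opNorm _).trans (mul_le_mul_of_nonneg_right ?_ (norm_nonneg _))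
    refine (norm_mul_le _ _).trans
      (mul_le_mul ((norm_mul_le _ _).trans ?_) hR (norm_nonneg _) ?_)
    · rw [hδ]
      gcongr
    · positivity
  calc |krrPrediction K' c y k' - krrPrediction K c y k|
      ≤ ‖toLp 2 y‖ * ‖R' (toLp 2 (k' - k))‖ + ‖toLp 2 y‖ * ‖(R' - R) (toLp 2 k)‖ := by
        rw [hsplit]
        exact (abs_add_le _ _).trans (add_le_add (abs_real_inner_le_norm _ _)
          (abs_real_inner_le_norm _ _))
    _ ≤ ‖toLp 2 y‖ * (c⁻¹ * ‖toLp 2 (k' - k)‖) + ‖toLp 2 y‖ * (c⁻¹ * δ * c⁻¹ * ‖toLp 2 k‖) := by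
        gcongr
        exact (R'.le_opNorm _).trans (by gcongr)
    _ = _ := by field_simp

end

theorem krr_stability_of_uniform_kernel_error_general (n : ℕ) (hn : 1 ≤ n)
    (K Khat : Matrix (Fin n) (Fin n) ℝ) (hK : K.PosSemidef) (hKhat : Khat.PosSemidef)
    (ε : ℝ) (hε : 0 ≤ ε)
    (hKerr : ∀ i j, |Khat i j - K i j| ≤ ε)
    (y kx kxhat : Fin n → ℝ)
    (hkx : ∀ i, |kx i| ≤ 1)
    (hkerr : ∀ i, |kxhat i - kx i| ≤ ε)
    (σy : ℝ) (hσy : σy = Real.sqrt ((1 / (n : ℝ)) * ∑ i, y i ^ 2))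
    (lam₀ : ℝ) (hlam₀ : 0 < lam₀)
    (h hhat : ℝ)
    (hdef : h = y ⬝ᵥ ((K + ((n : ℝ) * lam₀) • (1 : Matrix (Fin n) (Fin n) ℝ))⁻¹ *ᵥ kx))
    (hhatdef : hhat =
      y ⬝ᵥ ((Khat + ((n : ℝ) * lam₀) • (1 : Matrix (Fin n) (Fin n) ℝ))⁻¹ *ᵥ kxhat)) :
    ‖Matrix.toEuclideanCLM (𝕜 := ℝ) (Khat - K)‖ ≤
        Real.sqrt (∑ i, ∑ j, (Khat i j - K i j) ^ 2) ∧
      Real.sqrt (∑ i, ∑ j, (Khat i j - K i j) ^ 2) ≤ (n : ℝ) * ε ∧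
      ‖(WithLp.equiv 2 (Fin n → ℝ)).symm (kxhat - kx)‖ ≤ Real.sqrt n * ε ∧
      |hhat - h| ≤ ((lam₀ + 1) / lam₀ ^ 2) * σy * ε := by
  have hn₀ : (0 : ℝ) < n := by exact_mod_cast hn
  have hop := norm_toEuclideanCLM_le_sqrt_sum_sq (Khat - K)
  have hfrob : √(∑ i, ∑ j, (Khat i j - K i j) ^ 2) ≤ n * ε := by
    simpa using sqrt_sum_sum_sq_le_card_mul (A := Khat - K) hε hKerr
  have hkdiff : ‖toLp 2 (kxhat - kx)‖ ≤ √n * ε := by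
    simpa only [Fintype.card_fin] using norm_toLp_le_sqrt_card_mul (v := kxhat - kx) hε hkerr
  have hknorm : ‖toLp 2 kx‖ ≤ √n := by
    simpa using norm_toLp_le_sqrt_card_mul zero_le_one hkx
  have hynorm : ‖toLp 2 y‖ = √n * σy := by
    rw [hσy, EuclideanSpace.norm_eq_sqrt_sum_sq, ← sqrt_mul hn₀.le, ← mul_assoc,
      mul_one_div_cancel hn₀.ne', one_mul]
  have hσy₀ : 0 ≤ σy := hσy ▸ sqrt_nonneg _
  refine ⟨hop, hfrob, hkdiff, ?_⟩
  rw [hdef, hhatdef]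
  calc _ ≤ _ := abs_krrPrediction_sub_le hK hKhat (mul_pos hn₀ hlam₀) y kx kxhat
    _ ≤ √n * σy * (√n * ε / (n * lam₀) + n * ε * √n / (n * lam₀) ^ 2) := by
        rw [hynorm]
        gcongr
        exact hop.trans hfrob
    _ = ((lam₀ + 1) / lam₀ ^ 2) * σy * ε := by
        field_simp
        rw [sq_sqrt hn₀.le]
        ring

/-- If the kernel approximation has uniform entrywise error at most `ε`, then
`‖K̂ − K‖₂ ≤ ‖K̂ − K‖_F ≤ nε` (spectral and Frobenius norms), `‖k̂_x − k_x‖₂ ≤ √n ε`, and,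
with regularization `λ = nλ₀` and a kernel bounded by `1`, the kernel ridge regression
predictions satisfy `|ĥ(x) − h(x)| ≤ ((λ₀+1)/λ₀²) σ_y ε`. -/
theorem krr_stability_of_uniform_kernel_error (n : ℕ) (hn : 1 ≤ n)
    (K Khat : Matrix (Fin n) (Fin n) ℝ) (hK : K.PosSemidef) (hKhat : Khat.PosSemidef)
    (ε : ℝ) (hε : 0 ≤ ε)
    (hKerr : ∀ i j, |Khat i j - K i j| ≤ ε)
    (y kx kxhat : Fin n → ℝ) (hy : ∑ i, y i = 0)
    (hkx : ∀ i, |kx i| ≤ 1)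
    (hkerr : ∀ i, |kxhat i - kx i| ≤ ε)
    (σy : ℝ) (hσy : σy = Real.sqrt ((1 / (n : ℝ)) * ∑ i, y i ^ 2))
    (lam₀ : ℝ) (hlam₀ : 0 < lam₀)
    (h hhat : ℝ)
    (hdef : h = y ⬝ᵥ ((K + ((n : ℝ) * lam₀) • (1 : Matrix (Fin n) (Fin n) ℝ))⁻¹ *ᵥ kx))
    (hhatdef : hhat =
      y ⬝ᵥ ((Khat + ((n : ℝ) * lam₀) • (1 : Matrix (Fin n) (Fin n) ℝ))⁻¹ *ᵥ kxhat)) :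
    ‖Matrix.toEuclideanCLM (𝕜 := ℝ) (Khat - K)‖ ≤
        Real.sqrt (∑ i, ∑ j, (Khat i j - K i j) ^ 2) ∧
      Real.sqrt (∑ i, ∑ j, (Khat i j - K i j) ^ 2) ≤ (n : ℝ) * ε ∧
      ‖(WithLp.equiv 2 (Fin n → ℝ)).symm (kxhat - kx)‖ ≤ Real.sqrt n * ε ∧
      |hhat - h| ≤ ((lam₀ + 1) / lam₀ ^ 2) * σy * ε :=
  krr_stability_of_uniform_kernel_error_general n hn K Khat hK hKhat ε hε hKerr y kx kxhat hkx hkerr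
    σy hσy lam₀ hlam₀ h hhat hdef hhatdef
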